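/- For 1 < p < 2 and all j ≥ 1, the Fourier cosine coefficients satisfy |b_j(p)| < (8π_p/(j²π²)) · c_p, where c_p = (p-1)^{(p-1)/p}(2-p)^{(2-p)/p}. -/

import Mathlib

open Real Set

noncomputable def Fp (p y : ℝ) : ℝ := ∫ t in (0:ℝ)..y, (1 - t ^ p) ^ (-(1/p))

noncomputable def pip (p : ℝ) : ℝ := 2 * Fp p 1

noncomputable def cp (p : ℝ) : ℝ := (p - 1) ^ ((p - 1) / p) * (2 - p) ^ ((2 - p) / p)

/-!
On `[0, π_p/2]` the function `s` is the inverse of `F_p`, so there `s' = cos_p = (1 - s^p)^{1/p}`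
and `cos_p' = -φ(s)` with `φ(t) = t^{p-1} (1 - t^p)^{(2-p)/p}`. The symmetry `s(π_p - u) = s(u)`
turns `b_j` into `(1 - (-1)^j) (2/π_p) A` with `A = ∫_0^{π_p/2} cos_p(u) cos(ωu) du`, `ω = jπ/π_p`.
Integrating by parts twice gives `ω² A = ∫_0^{π_p/2} (φ ∘ s)'(u) cos(ωu) du`. As `φ ∘ s` rises
from `0` to its maximum `c_p`, attained where `s = (p-1)^{1/p}`, and falls back to `0`, this
integral is at most the total variation `2 c_p` of `φ ∘ s`; the inequality is strict because
`|cos(ωu)| < 1` for small `u > 0`, where `φ ∘ s` is strictly increasing.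
-/

open MeasureTheory

theorem one_sub_rpow_pos {p t : ℝ} (hp : 0 < p) (ht : t ∈ Ico 0 1) : 0 < 1 - t ^ p := by
  linarith [rpow_lt_one ht.1 ht.2 hp]

theorem intervalIntegrable_one_sub_rpow {e : ℝ} (he : -1 < e) :
    IntervalIntegrable (fun t : ℝ => (1 - t) ^ e) volume 0 1 := by
  simpa using
    ((intervalIntegral.intervalIntegrable_rpow' (a := 0) (b := 1) he).comp_sub_left 1).symm

theorem abs_cos_lt_one {x : ℝ} (hx : x ∈ Ioo 0 π) : |cos x| < 1 := by
  rw [← sq_lt_one_iff_abs_lt_one, cos_sq']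
  linarith [pow_pos (sin_pos_of_pos_of_lt_pi hx.1 hx.2) 2]

theorem hasDerivAt_sin_const_mul (ω x : ℝ) :
    HasDerivAt (fun x => sin (ω * x)) (ω * cos (ω * x)) x := by
  simpa [mul_comm] using ((hasDerivAt_id x).const_mul ω).sin

theorem hasDerivAt_cos_const_mul (ω x : ℝ) :
    HasDerivAt (fun x => cos (ω * x)) (-ω * sin (ω * x)) x := by
  simpa [mul_comm] using ((hasDerivAt_id x).const_mul ω).cos

theorem deriv_const_sub_eq_neg_of_forall {f : ℝ → ℝ} {L : ℝ} (hf : ∀ x, f (L - x) = f x)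
    (x : ℝ) : deriv f (L - x) = -deriv f x := by
  rw [← neg_neg (deriv f (L - x)), ← deriv_comp_const_sub, funext hf]

theorem continuousOn_Icc_of_monotoneOn_of_image_eq {f : ℝ → ℝ} {a b c d : ℝ}
    (hf : MonotoneOn f (Icc a b)) (himg : f '' Icc a b = Icc c d) :
    ContinuousOn f (Icc a b) := by
  rw [continuousOn_iff_continuous_domRestrict]
  let g : Icc a b → Icc c d := fun x => ⟨f x, himg ▸ mem_image_of_mem f x.2⟩
  have hg : Continuous g := by
    refine Monotone.continuous_of_surjective (fun x y hxy => hf x.2 y.2 hxy) ?_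
    rintro ⟨y, hy⟩
    obtain ⟨x, hx, rfl⟩ := himg.symm ▸ hy
    exact ⟨⟨x, hx⟩, rfl⟩
  exact continuous_subtype_val.comp hg

theorem Set.LeftInvOn.strictMonoOn_image {α β : Type*} [LinearOrder α] [Preorder β]
    {f : α → β} {g : β → α} {s : Set α} (hg : LeftInvOn g f s) (hf : StrictMonoOn f s) :
    StrictMonoOn g (f '' s) := by
  rintro _ ⟨a, ha, rfl⟩ _ ⟨b, hb, rfl⟩ hab
  rw [hg ha, hg hb]
  exact (hf.lt_iff_lt ha hb).mp hab

theorem integral_eq_one_add_mul_integral_half_of_reflect {f : ℝ → ℝ} {L c : ℝ}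
    (hf : IntervalIntegrable f volume 0 (L / 2)) (hrefl : ∀ u, f (L - u) = c * f u) :
    ∫ u in 0..L, f u = (1 + c) * ∫ u in 0..L / 2, f u := by
  have hf' : EqOn f (fun u => c * f (L - u)) univ := fun u _ => by
    simpa using hrefl (L - u)
  have hf2 : IntervalIntegrable f volume (L / 2) L := by
    have := (hf.comp_sub_left L).const_mul c
    rw [sub_zero, sub_half] at this
    exact (this.congr fun u _ => (hf' trivial).symm).symm
  have hupper : ∫ u in L / 2..L, f u = c * ∫ u in 0..L / 2, f u := by
    rw [intervalIntegral.integral_congr (hf'.mono (subset_univ _)),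
      intervalIntegral.integral_const_mul, intervalIntegral.integral_comp_sub_left, sub_self,
      sub_half]
  rw [← intervalIntegral.integral_add_adjacent_intervals hf hf2, hupper]
  ring

theorem integral_deriv_comp_mul_mul_cos_of_symm {s : ℝ → ℝ} {L ω : ℝ} {j : ℕ} (hL : L ≠ 0)
    (hωL : ω * L = j * π) (hsym : ∀ x, s (L / 2 - x) = s (L / 2 + x))
    (hint : IntervalIntegrable (fun u => deriv s u * cos (ω * u)) volume 0 (L / 2)) :
    ∫ x in 0..1, deriv s (L * x) * cos (j * π * x) =
      L⁻¹ * ((1 - (-1) ^ j) * ∫ u in 0..L / 2, deriv s u * cos (ω * u)) := by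
  have hs : ∀ x, s (L - x) = s x := fun x => by
    have := hsym (L / 2 - x)
    rwa [sub_sub_cancel, ← add_sub_assoc, add_halves, eq_comm] at this
  have hrefl : ∀ u, deriv s (L - u) * cos (ω * (L - u)) =
      -(-1) ^ j * (deriv s u * cos (ω * u)) := fun u => by
    rw [deriv_const_sub_eq_neg_of_forall hs, mul_sub, hωL, cos_nat_mul_pi_sub]
    ring
  have hscale := intervalIntegral.integral_comp_mul_left (a := 0) (b := 1)
    (fun u => deriv s u * cos (ω * u)) hL
  simp only [mul_zero, mul_one, smul_eq_mul, ← mul_assoc, hωL] at hscale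
  rw [hscale, integral_eq_one_add_mul_integral_half_of_reflect hint hrefl, ← sub_eq_add_neg]

theorem intervalIntegral_pos_of_nonneg_of_pos_on_Ioo {f : ℝ → ℝ} {a b c : ℝ}
    (hac : a < c) (hcb : c ≤ b) (hf : IntervalIntegrable f volume a b)
    (hf0 : ∀ x ∈ Ioo a b, 0 ≤ f x) (hpos : ∀ x ∈ Ioo a c, 0 < f x) :
    0 < ∫ x in a..b, f x := by
  have hc : c ∈ uIcc a b := mem_uIcc_of_le hac.le hcb
  have hf₁ := hf.mono_set (uIcc_subset_uIcc_left hc)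
  have hf₂ := hf.mono_set (uIcc_subset_uIcc_right hc)
  have hleft : 0 < ∫ x in a..c, f x := intervalIntegral.intervalIntegral_pos_of_pos_on hf₁ hpos hac
  have hright : 0 ≤ ∫ x in c..b, f x := by
    simpa using intervalIntegral.integral_mono_on_of_le_Ioo hcb intervalIntegrable_const hf₂
      fun x hx => hf0 x ⟨hac.trans hx.1, hx.2⟩
  rw [← intervalIntegral.integral_add_adjacent_intervals hf₁ hf₂]
  linarith

section MonotoneVariation

variable {f f' g : ℝ → ℝ} {a b : ℝ}

theorem abs_integral_deriv_mul_le (hab : a ≤ b) (hf : ContinuousOn f (Icc a b))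
    (hf' : ∀ x ∈ Ioo a b, HasDerivAt f (f' x) x) (hf'0 : ∀ x ∈ Ioo a b, 0 ≤ f' x)
    (hg : ContinuousOn g (Icc a b)) (hg1 : ∀ x ∈ Icc a b, |g x| ≤ 1) :
    |∫ x in a..b, f' x * g x| ≤ f b - f a := by
  have hint : IntervalIntegrable f' volume a b := (intervalIntegrable_iff_integrableOn_Ioc_of_le
    hab).2 (intervalIntegral.integrableOn_deriv_of_nonneg hf hf' hf'0)
  rw [← intervalIntegral.integral_eq_sub_of_hasDerivAt_of_le hab hf hf' hint]
  refine (intervalIntegral.abs_integral_le_integral_abs hab).trans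
    (intervalIntegral.integral_mono_on_of_le_Ioo hab ?_ hint fun x hx => ?_)
  · exact (hint.mul_continuousOn (by rwa [uIcc_of_le hab])).abs
  · rw [abs_mul, abs_of_nonneg (hf'0 x hx)]
    exact mul_le_of_le_one_right (hf'0 x hx) (hg1 x (Ioo_subset_Icc_self hx))

theorem abs_integral_deriv_mul_lt {c : ℝ} (hac : a < c) (hcb : c ≤ b)
    (hf : ContinuousOn f (Icc a b))
    (hf' : ∀ x ∈ Ioo a b, HasDerivAt f (f' x) x) (hf'0 : ∀ x ∈ Ioo a b, 0 ≤ f' x)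
    (hg : ContinuousOn g (Icc a b)) (hg1 : ∀ x ∈ Icc a b, |g x| ≤ 1)
    (hstrict : ∀ x ∈ Ioo a c, 0 < f' x ∧ |g x| < 1) :
    |∫ x in a..b, f' x * g x| < f b - f a := by
  have hab : a ≤ b := hac.le.trans hcb
  have hint : IntervalIntegrable f' volume a b := (intervalIntegrable_iff_integrableOn_Ioc_of_le
    hab).2 (intervalIntegral.integrableOn_deriv_of_nonneg hf hf' hf'0)
  have hintg : IntervalIntegrable (fun x => f' x * g x) volume a b :=
    hint.mul_continuousOn (by rwa [uIcc_of_le hab])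
  have key : ∀ σ : ℝ, |σ| = 1 → σ * ∫ x in a..b, f' x * g x < f b - f a := by
    intro σ hσ
    -- `f b - f a - σ ∫ f' g = ∫ f' (1 - σ g)`, whose integrand is positive on `(a, c)`
    rw [← intervalIntegral.integral_eq_sub_of_hasDerivAt_of_le hab hf hf' hint,
      ← intervalIntegral.integral_const_mul, ← sub_pos,
      ← intervalIntegral.integral_sub hint (hintg.const_mul σ)]
    have hσg : ∀ x, |σ * g x| = |g x| := fun x => by rw [abs_mul, hσ, one_mul]
    refine intervalIntegral_pos_of_nonneg_of_pos_on_Ioo hac hcb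
      (hint.sub (hintg.const_mul σ)) (fun x hx => ?_) (fun x hx => ?_)
    · have := (abs_le.mp ((hσg x).trans_le (hg1 x (Ioo_subset_Icc_self hx)))).2
      nlinarith [hf'0 x hx]
    · obtain ⟨hpos, hlt⟩ := hstrict x hx
      have := (abs_lt.mp ((hσg x).trans_lt hlt)).2
      nlinarith
  rw [abs_lt]
  constructor
  · linarith [key (-1) (by norm_num)]
  · linarith [key 1 (by norm_num)]

end MonotoneVariation

section Fp

variable {p : ℝ}

theorem measurable_Fp_integrand (p : ℝ) : Measurable fun t : ℝ => (1 - t ^ p) ^ (-(1 / p)) := by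
  measurability

theorem intervalIntegrable_Fp_integrand (hp : 1 < p) :
    IntervalIntegrable (fun t : ℝ => (1 - t ^ p) ^ (-(1 / p))) volume 0 1 := by
  have he : -1 < -(1 / p) := by
    rw [neg_lt_neg_iff, div_lt_one (by linarith)]; exact hp
  refine (intervalIntegrable_one_sub_rpow he).mono_fun
    (measurable_Fp_integrand p).aestronglyMeasurable ?_
  rw [Filter.EventuallyLE, ae_restrict_iff' measurableSet_uIoc, uIoc_of_le zero_le_one]
  refine Filter.Eventually.of_forall fun t ht => ?_
  have hle : t ^ p ≤ t := by simpa using rpow_le_rpow_of_exponent_ge ht.1 ht.2 hp.le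
  rw [norm_of_nonneg (rpow_nonneg (by linarith [ht.2]) _),
    norm_of_nonneg (rpow_nonneg (by linarith [ht.2]) _)]
  rcases ht.2.eq_or_lt with rfl | ht1
  · simp
  · exact rpow_le_rpow_of_nonpos (by linarith) (by linarith) (neg_nonpos.mpr (by positivity))

theorem continuousOn_Fp (hp : 1 < p) : ContinuousOn (Fp p) (Icc 0 1) := by
  rw [← uIcc_of_le zero_le_one]
  exact intervalIntegral.continuousOn_primitive_interval' (intervalIntegrable_Fp_integrand hp)
    left_mem_uIcc

theorem hasDerivAt_Fp (hp : 1 < p) {t : ℝ} (ht : t ∈ Ioo 0 1) :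
    HasDerivAt (Fp p) ((1 - t ^ p) ^ (-(1 / p))) t :=
  intervalIntegral.integral_hasDerivAt_right
    ((intervalIntegrable_Fp_integrand hp).mono_set (uIcc_subset_uIcc_left
      (mem_uIcc_of_le ht.1.le ht.2.le)))
    (measurable_Fp_integrand p).stronglyMeasurable.stronglyMeasurableAtFilter
    ((continuous_const.sub (continuous_rpow_const (by linarith))).continuousAt.rpow_const
      (Or.inl (one_sub_rpow_pos (by linarith) ⟨ht.1.le, ht.2⟩).ne'))

theorem strictMonoOn_Fp (hp : 1 < p) : StrictMonoOn (Fp p) (Icc 0 1) := by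
  refine strictMonoOn_of_deriv_pos (convex_Icc 0 1) (continuousOn_Fp hp) fun t ht => ?_
  rw [interior_Icc] at ht
  rw [(hasDerivAt_Fp hp ht).deriv]
  exact rpow_pos_of_pos (one_sub_rpow_pos (by linarith) ⟨ht.1.le, ht.2⟩) _

theorem Fp_zero : Fp p 0 = 0 := intervalIntegral.integral_same

theorem Fp_one : Fp p 1 = pip p / 2 := by
  rw [pip]; ring

theorem pip_pos (hp : 1 < p) : 0 < pip p := by
  have := strictMonoOn_Fp hp (left_mem_Icc.mpr zero_le_one) (right_mem_Icc.mpr zero_le_one)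
    zero_lt_one
  rw [Fp_zero, Fp_one] at this
  linarith

theorem image_Fp_Icc (hp : 1 < p) : Fp p '' Icc 0 1 = Icc 0 (pip p / 2) := by
  rw [(continuousOn_Fp hp).image_Icc_of_monotoneOn zero_le_one (strictMonoOn_Fp hp).monotoneOn,
    Fp_zero, Fp_one]

end Fp

namespace SinP

section Profiles

variable {p t : ℝ}

noncomputable def cospOfSinp (p t : ℝ) : ℝ := (1 - t ^ p) ^ (1 / p)

-- `cos_p' = -phi p ∘ sin_p` on `[0, π_p / 2]`
noncomputable def phi (p t : ℝ) : ℝ := t ^ (p - 1) * (1 - t ^ p) ^ ((2 - p) / p)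

noncomputable def phiDeriv (p t : ℝ) : ℝ :=
  t ^ (p - 2) * (1 - t ^ p) ^ ((2 - p) / p - 1) * (p - 1 - t ^ p)

noncomputable def phiMaxPoint (p : ℝ) : ℝ := (p - 1) ^ (1 / p)

theorem continuous_cospOfSinp (hp : 0 < p) : Continuous (cospOfSinp p) :=
  (continuous_const.sub (continuous_rpow_const hp.le)).rpow_const fun _ => Or.inr (by positivity)

theorem cospOfSinp_pos (hp : 0 < p) (ht : t ∈ Ico 0 1) : 0 < cospOfSinp p t :=
  rpow_pos_of_pos (one_sub_rpow_pos hp ht) _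

theorem cospOfSinp_one (hp : 0 < p) : cospOfSinp p 1 = 0 := by
  simp [cospOfSinp, hp.ne']

theorem cospOfSinp_eq_inv (hp : 0 < p) (ht : t ∈ Ico 0 1) :
    cospOfSinp p t = ((1 - t ^ p) ^ (-(1 / p)))⁻¹ := by
  rw [rpow_neg (one_sub_rpow_pos hp ht).le, inv_inv, cospOfSinp]

theorem hasDerivAt_one_sub_rpow_rpow (hp : 0 < p) {e : ℝ} (ht : t ∈ Ioo 0 1) :
    HasDerivAt (fun x => (1 - x ^ p) ^ e)
      (-(p * t ^ (p - 1)) * e * (1 - t ^ p) ^ (e - 1)) t :=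
  ((hasDerivAt_rpow_const (Or.inl ht.1.ne')).const_sub 1).rpow_const
    (Or.inl (one_sub_rpow_pos hp ⟨ht.1.le, ht.2⟩).ne')

theorem hasDerivAt_cospOfSinp (hp : 0 < p) (ht : t ∈ Ioo 0 1) :
    HasDerivAt (cospOfSinp p) (-phi p t / cospOfSinp p t) t := by
  have hu := one_sub_rpow_pos hp ⟨ht.1.le, ht.2⟩
  have hexp :
      (1 - t ^ p) ^ (1 / p - 1) * (1 - t ^ p) ^ (1 / p) = (1 - t ^ p) ^ ((2 - p) / p) := by
    rw [← rpow_add hu]; congr 1; field_simp; ring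
  refine (hasDerivAt_one_sub_rpow_rpow hp ht).congr_deriv ?_
  rw [phi, cospOfSinp, eq_div_iff (rpow_pos_of_pos hu _).ne', ← hexp]
  field_simp

theorem continuous_phi (hp1 : 1 < p) (hp2 : p < 2) : Continuous (phi p) := by
  have hp : 0 < p := by linarith
  exact (continuous_rpow_const (by linarith)).mul
    ((continuous_const.sub (continuous_rpow_const hp.le)).rpow_const
      fun _ => Or.inr (div_nonneg (by linarith) hp.le))

theorem phi_zero (hp1 : 1 < p) : phi p 0 = 0 := by
  simp [phi, zero_rpow (by linarith : p - 1 ≠ 0)]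

theorem phi_one (hp1 : 1 < p) (hp2 : p < 2) : phi p 1 = 0 := by
  rw [phi, one_rpow, one_rpow, sub_self, zero_rpow (div_pos (by linarith) (by linarith)).ne',
    mul_zero]

theorem phiMaxPoint_rpow (hp1 : 1 < p) : phiMaxPoint p ^ p = p - 1 := by
  rw [phiMaxPoint, ← rpow_mul (by linarith), one_div_mul_cancel (by linarith), rpow_one]

theorem phiMaxPoint_mem (hp1 : 1 < p) (hp2 : p < 2) : phiMaxPoint p ∈ Ioo 0 1 :=
  ⟨rpow_pos_of_pos (by linarith) _, rpow_lt_one (by linarith) (by linarith) (by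
    have : 0 < p := by linarith
    positivity)⟩

theorem phi_phiMaxPoint (hp1 : 1 < p) : phi p (phiMaxPoint p) = cp p := by
  rw [phi, phiMaxPoint_rpow hp1, phiMaxPoint, ← rpow_mul (by linarith), cp]
  congr 2 <;> ring

theorem hasDerivAt_phi (hp : 0 < p) (ht : t ∈ Ioo 0 1) :
    HasDerivAt (phi p) (phiDeriv p t) t := by
  have hu := one_sub_rpow_pos hp ⟨ht.1.le, ht.2⟩
  have hT : t ^ (p - 1) * t ^ (p - 1) = t ^ (p - 2) * t ^ p := by
    rw [← rpow_add ht.1, ← rpow_add ht.1]; ring_nf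
  have hV : (1 - t ^ p) ^ ((2 - p) / p) = (1 - t ^ p) ^ ((2 - p) / p - 1) * (1 - t ^ p) := by
    rw [← rpow_add_one hu.ne']; ring_nf
  have he : (2 - p) / p * p = 2 - p := div_mul_cancel₀ _ hp.ne'
  refine ((hasDerivAt_rpow_const (p := p - 1) (Or.inl ht.1.ne')).mul
    (hasDerivAt_one_sub_rpow_rpow hp ht)).congr_deriv ?_
  rw [phiDeriv, show p - 1 - 1 = p - 2 by ring]
  linear_combination (p - 1) * t ^ (p - 2) * hV
    - (1 - t ^ p) ^ ((2 - p) / p - 1) * ((2 - p) / p * p) * hT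
    - (1 - t ^ p) ^ ((2 - p) / p - 1) * t ^ (p - 2) * t ^ p * he

theorem phiDeriv_pos (hp1 : 1 < p) (ht : t ∈ Ioo 0 (phiMaxPoint p)) (ht1 : t < 1) :
    0 < phiDeriv p t := by
  have hp : 0 < p := by linarith
  have hlt : t ^ p < p - 1 :=
    phiMaxPoint_rpow hp1 ▸ rpow_lt_rpow ht.1.le ht.2 hp
  exact mul_pos (mul_pos (rpow_pos_of_pos ht.1 _)
    (rpow_pos_of_pos (one_sub_rpow_pos hp ⟨ht.1.le, ht1⟩) _)) (by linarith)

theorem phiDeriv_nonpos (hp1 : 1 < p) (ht : t ∈ Icc (phiMaxPoint p) 1) : phiDeriv p t ≤ 0 := by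
  have hp : 0 < p := by linarith
  have h0 : 0 ≤ phiMaxPoint p := rpow_nonneg (by linarith) _
  have hle : p - 1 ≤ t ^ p :=
    phiMaxPoint_rpow hp1 ▸ rpow_le_rpow h0 ht.1 hp.le
  refine mul_nonpos_of_nonneg_of_nonpos (mul_nonneg (rpow_nonneg (h0.trans ht.1) _)
    (rpow_nonneg ?_ _)) (by linarith)
  linarith [rpow_le_one (h0.trans ht.1) ht.2 hp.le]

end Profiles

section Inverse

variable {p : ℝ} {s : ℝ → ℝ}

theorem image_Icc_of_leftInvOn_Fp (hp : 1 < p) (hs : LeftInvOn s (Fp p) (Icc 0 1)) :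
    s '' Icc 0 (pip p / 2) = Icc 0 1 := by
  rw [← image_Fp_Icc hp, hs.image_image]

theorem strictMonoOn_of_leftInvOn_Fp (hp : 1 < p) (hs : LeftInvOn s (Fp p) (Icc 0 1)) :
    StrictMonoOn s (Icc 0 (pip p / 2)) :=
  image_Fp_Icc hp ▸ hs.strictMonoOn_image (strictMonoOn_Fp hp)

theorem continuousOn_of_leftInvOn_Fp (hp : 1 < p) (hs : LeftInvOn s (Fp p) (Icc 0 1)) :
    ContinuousOn s (Icc 0 (pip p / 2)) :=
  continuousOn_Icc_of_monotoneOn_of_image_eq (strictMonoOn_of_leftInvOn_Fp hp hs).monotoneOn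
    (image_Icc_of_leftInvOn_Fp hp hs)

theorem apply_zero_of_leftInvOn_Fp (hs : LeftInvOn s (Fp p) (Icc 0 1)) : s 0 = 0 := by
  simpa [Fp_zero] using hs (left_mem_Icc.mpr zero_le_one)

theorem apply_half_pip_of_leftInvOn_Fp (hs : LeftInvOn s (Fp p) (Icc 0 1)) :
    s (pip p / 2) = 1 := by
  simpa [Fp_one] using hs (right_mem_Icc.mpr zero_le_one)

theorem mapsTo_Ioo_of_leftInvOn_Fp (hp : 1 < p) (hs : LeftInvOn s (Fp p) (Icc 0 1)) :
    MapsTo s (Ioo 0 (pip p / 2)) (Ioo 0 1) := by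
  intro u hu
  have hmono := strictMonoOn_of_leftInvOn_Fp hp hs
  have hP : 0 ≤ pip p / 2 := hu.1.le.trans hu.2.le
  constructor
  · simpa [apply_zero_of_leftInvOn_Fp hs] using
      hmono (left_mem_Icc.mpr hP) (Ioo_subset_Icc_self hu) hu.1
  · simpa [apply_half_pip_of_leftInvOn_Fp hs] using
      hmono (Ioo_subset_Icc_self hu) (right_mem_Icc.mpr hP) hu.2

theorem hasDerivAt_of_leftInvOn_Fp (hp : 1 < p) (hs : LeftInvOn s (Fp p) (Icc 0 1))
    {u : ℝ} (hu : u ∈ Ioo 0 (pip p / 2)) : HasDerivAt s (cospOfSinp p (s u)) u := by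
  have hsu := mapsTo_Ioo_of_leftInvOn_Fp hp hs hu
  have hnhds : Icc 0 (pip p / 2) ∈ nhds u := Icc_mem_nhds hu.1 hu.2
  rw [cospOfSinp_eq_inv (by linarith) (Ioo_subset_Ico_self hsu)]
  refine HasDerivAt.of_local_left_inverse
    ((continuousOn_of_leftInvOn_Fp hp hs).continuousAt hnhds) (hasDerivAt_Fp hp hsu)
    (rpow_pos_of_pos (one_sub_rpow_pos (by linarith) (Ioo_subset_Ico_self hsu)) _).ne' ?_
  filter_upwards [hnhds] with y hy
  exact hs.rightInvOn_image (image_Fp_Icc hp ▸ hy)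

theorem Fp_phiMaxPoint_mem (hp1 : 1 < p) (hp2 : p < 2) :
    Fp p (phiMaxPoint p) ∈ Ioo 0 (pip p / 2) := by
  have hm := phiMaxPoint_mem hp1 hp2
  have hmono := strictMonoOn_Fp hp1
  constructor
  · simpa [Fp_zero] using hmono (left_mem_Icc.mpr zero_le_one) (Ioo_subset_Icc_self hm) hm.1
  · simpa [Fp_one] using hmono (Ioo_subset_Icc_self hm) (right_mem_Icc.mpr zero_le_one) hm.2

theorem apply_Fp_phiMaxPoint (hp1 : 1 < p) (hp2 : p < 2)
    (hs : LeftInvOn s (Fp p) (Icc 0 1)) :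
    s (Fp p (phiMaxPoint p)) = phiMaxPoint p :=
  hs (Ioo_subset_Icc_self (phiMaxPoint_mem hp1 hp2))

theorem phiDeriv_comp_mul_pos (hp1 : 1 < p) (hp2 : p < 2)
    (hs : LeftInvOn s (Fp p) (Icc 0 1)) {u : ℝ} (hu : u ∈ Ioo 0 (Fp p (phiMaxPoint p))) :
    0 < phiDeriv p (s u) * cospOfSinp p (s u) := by
  have hm := Fp_phiMaxPoint_mem hp1 hp2
  have hu' : u ∈ Ioo 0 (pip p / 2) := ⟨hu.1, hu.2.trans hm.2⟩
  have hsu := mapsTo_Ioo_of_leftInvOn_Fp hp1 hs hu'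
  have hlt : s u < phiMaxPoint p := apply_Fp_phiMaxPoint hp1 hp2 hs ▸
    strictMonoOn_of_leftInvOn_Fp hp1 hs (Ioo_subset_Icc_self hu') (Ioo_subset_Icc_self hm) hu.2
  exact mul_pos (phiDeriv_pos hp1 ⟨hsu.1, hlt⟩ hsu.2)
    (cospOfSinp_pos (by linarith) (Ioo_subset_Ico_self hsu))

theorem phiDeriv_comp_mul_nonpos (hp1 : 1 < p) (hp2 : p < 2)
    (hs : LeftInvOn s (Fp p) (Icc 0 1)) {u : ℝ} (hu : u ∈ Ioo (Fp p (phiMaxPoint p)) (pip p / 2)) :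
    phiDeriv p (s u) * cospOfSinp p (s u) ≤ 0 := by
  have hm := Fp_phiMaxPoint_mem hp1 hp2
  have hu' : u ∈ Ioo 0 (pip p / 2) := ⟨hm.1.trans hu.1, hu.2⟩
  have hsu := mapsTo_Ioo_of_leftInvOn_Fp hp1 hs hu'
  have hlt : phiMaxPoint p < s u := apply_Fp_phiMaxPoint hp1 hp2 hs ▸
    strictMonoOn_of_leftInvOn_Fp hp1 hs (Ioo_subset_Icc_self hm) (Ioo_subset_Icc_self hu') hu.1
  exact mul_nonpos_of_nonpos_of_nonneg (phiDeriv_nonpos hp1 ⟨hlt.le, hsu.2.le⟩)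
    (cospOfSinp_pos (by linarith) (Ioo_subset_Ico_self hsu)).le

end Inverse

section Coefficient

variable {p : ℝ} {s : ℝ → ℝ}

theorem hasDerivAt_cospOfSinp_comp (hp : 1 < p) (hs : LeftInvOn s (Fp p) (Icc 0 1))
    {u : ℝ} (hu : u ∈ Ioo 0 (pip p / 2)) :
    HasDerivAt (fun u => cospOfSinp p (s u)) (-phi p (s u)) u := by
  have hsu := mapsTo_Ioo_of_leftInvOn_Fp hp hs hu
  refine ((hasDerivAt_cospOfSinp (by linarith) hsu).comp u
    (hasDerivAt_of_leftInvOn_Fp hp hs hu)).congr_deriv ?_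
  exact div_mul_cancel₀ _ (cospOfSinp_pos (by linarith) (Ioo_subset_Ico_self hsu)).ne'

theorem hasDerivAt_phi_comp (hp : 1 < p) (hs : LeftInvOn s (Fp p) (Icc 0 1))
    {u : ℝ} (hu : u ∈ Ioo 0 (pip p / 2)) :
    HasDerivAt (fun u => phi p (s u)) (phiDeriv p (s u) * cospOfSinp p (s u)) u :=
  (hasDerivAt_phi (by linarith) (mapsTo_Ioo_of_leftInvOn_Fp hp hs hu)).comp u
    (hasDerivAt_of_leftInvOn_Fp hp hs hu)

theorem continuousOn_cospOfSinp_comp (hp : 1 < p) (hs : LeftInvOn s (Fp p) (Icc 0 1)) :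
    ContinuousOn (fun u => cospOfSinp p (s u)) (Icc 0 (pip p / 2)) :=
  (continuous_cospOfSinp (by linarith)).comp_continuousOn (continuousOn_of_leftInvOn_Fp hp hs)

theorem continuousOn_phi_comp (hp1 : 1 < p) (hp2 : p < 2) (hs : LeftInvOn s (Fp p) (Icc 0 1)) :
    ContinuousOn (fun u => phi p (s u)) (Icc 0 (pip p / 2)) :=
  (continuous_phi hp1 hp2).comp_continuousOn (continuousOn_of_leftInvOn_Fp hp1 hs)

theorem mul_integral_cospOfSinp_comp_mul_cos (hp1 : 1 < p) (hp2 : p < 2)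
    (hs : LeftInvOn s (Fp p) (Icc 0 1)) (ω : ℝ) :
    ω * ∫ u in 0..pip p / 2, cospOfSinp p (s u) * cos (ω * u) =
      ∫ u in 0..pip p / 2, phi p (s u) * sin (ω * u) := by
  have hP : 0 ≤ pip p / 2 := by linarith [pip_pos hp1]
  have hibp := intervalIntegral.integral_mul_deriv_eq_deriv_mul_of_hasDerivAt
    (u := fun u => cospOfSinp p (s u)) (v := fun u => sin (ω * u)) (u' := fun u => -phi p (s u))
    (by rw [uIcc_of_le hP]; exact continuousOn_cospOfSinp_comp hp1 hs)
    (by fun_prop) (by simpa [hP] using fun x hx => hasDerivAt_cospOfSinp_comp hp1 hs hx)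
    (fun x _ => hasDerivAt_sin_const_mul ω x)
    ((intervalIntegrable_iff_integrableOn_Icc_of_le hP).2
      (continuousOn_phi_comp hp1 hp2 hs).neg.integrableOn_Icc)
    (by apply Continuous.intervalIntegrable; fun_prop)
  simp only [apply_half_pip_of_leftInvOn_Fp hs, cospOfSinp_one (by linarith : 0 < p), zero_mul,
    mul_zero, sin_zero, sub_zero, zero_sub, neg_mul, intervalIntegral.integral_neg,
    neg_neg] at hibp
  rw [← hibp, ← intervalIntegral.integral_const_mul]
  congr 1 with u
  ring

theorem intervalIntegrable_phiDeriv_comp_mul (hp1 : 1 < p) (hp2 : p < 2)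
    (hs : LeftInvOn s (Fp p) (Icc 0 1)) :
    IntervalIntegrable (fun u => phiDeriv p (s u) * cospOfSinp p (s u)) volume 0 (pip p / 2) := by
  have hm := Fp_phiMaxPoint_mem hp1 hp2
  have hcont := continuousOn_phi_comp hp1 hp2 hs
  have hderiv : ∀ x ∈ Ioo 0 (pip p / 2), HasDerivAt (fun u => phi p (s u))
      (phiDeriv p (s x) * cospOfSinp p (s x)) x := fun x hx => hasDerivAt_phi_comp hp1 hs hx
  have hleft : IntervalIntegrable (fun u => phiDeriv p (s u) * cospOfSinp p (s u)) volume 0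
      (Fp p (phiMaxPoint p)) :=
    (intervalIntegrable_iff_integrableOn_Ioc_of_le hm.1.le).2
      (intervalIntegral.integrableOn_deriv_of_nonneg (hcont.mono (Icc_subset_Icc le_rfl hm.2.le))
        (fun x hx => hderiv x (Ioo_subset_Ioo_right hm.2.le hx))
        fun x hx => (phiDeriv_comp_mul_pos hp1 hp2 hs hx).le)
  have hright : IntervalIntegrable (fun u => -(phiDeriv p (s u) * cospOfSinp p (s u))) volume
      (Fp p (phiMaxPoint p)) (pip p / 2) :=
    (intervalIntegrable_iff_integrableOn_Ioc_of_le hm.2.le).2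
      (intervalIntegral.integrableOn_deriv_of_nonneg (g := fun u => -phi p (s u))
        (hcont.neg.mono (Icc_subset_Icc hm.1.le le_rfl))
        (fun x hx => (hderiv x (Ioo_subset_Ioo_left hm.1.le hx)).fun_neg)
        fun x hx => neg_nonneg.mpr (phiDeriv_comp_mul_nonpos hp1 hp2 hs hx))
  exact hleft.trans (by simpa [Pi.neg_def] using hright.neg)

theorem integral_phiDeriv_comp_mul_cos (hp1 : 1 < p) (hp2 : p < 2)
    (hs : LeftInvOn s (Fp p) (Icc 0 1)) (ω : ℝ) :
    ∫ u in 0..pip p / 2, phiDeriv p (s u) * cospOfSinp p (s u) * cos (ω * u) =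
      ω * ∫ u in 0..pip p / 2, phi p (s u) * sin (ω * u) := by
  have hP : 0 ≤ pip p / 2 := by linarith [pip_pos hp1]
  have hibp := intervalIntegral.integral_mul_deriv_eq_deriv_mul_of_hasDerivAt
    (u := fun u => phi p (s u)) (v := fun u => cos (ω * u))
    (by rw [uIcc_of_le hP]; exact continuousOn_phi_comp hp1 hp2 hs)
    (by fun_prop) (by simpa [hP] using fun x hx => hasDerivAt_phi_comp hp1 hs hx)
    (fun x _ => hasDerivAt_cos_const_mul ω x)
    (intervalIntegrable_phiDeriv_comp_mul hp1 hp2 hs)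
    (by apply Continuous.intervalIntegrable; fun_prop)
  rw [apply_half_pip_of_leftInvOn_Fp hs, apply_zero_of_leftInvOn_Fp hs, phi_one hp1 hp2,
    phi_zero hp1, zero_mul, zero_mul, sub_zero, zero_sub] at hibp
  rw [eq_comm, ← neg_neg (∫ u in _.._, _ * _ * _), ← hibp, ← intervalIntegral.integral_const_mul,
    ← intervalIntegral.integral_neg]
  congr 1 with u
  ring

theorem abs_integral_phiDeriv_comp_mul_cos_lt (hp1 : 1 < p) (hp2 : p < 2)
    (hs : LeftInvOn s (Fp p) (Icc 0 1)) {ω : ℝ} (hω : 0 < ω) :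
    |∫ u in 0..pip p / 2, phiDeriv p (s u) * cospOfSinp p (s u) * cos (ω * u)| < 2 * cp p := by
  -- split `[0, π_p / 2]` where `phi p ∘ s` attains its maximum `c_p`
  set m := Fp p (phiMaxPoint p)
  have hm : m ∈ Ioo 0 (pip p / 2) := Fp_phiMaxPoint_mem hp1 hp2
  have hsm : s m = phiMaxPoint p := apply_Fp_phiMaxPoint hp1 hp2 hs
  have hcont := continuousOn_phi_comp hp1 hp2 hs
  have hcos : Continuous fun u => cos (ω * u) := by fun_prop
  have hint := (intervalIntegrable_phiDeriv_comp_mul hp1 hp2 hs).mul_continuousOn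
    hcos.continuousOn
  have hleft : |∫ u in 0..m, phiDeriv p (s u) * cospOfSinp p (s u) * cos (ω * u)| < cp p := by
    have hc : 0 < min m (π / ω) := lt_min hm.1 (by positivity)
    have hstrict : ∀ x ∈ Ioo 0 (min m (π / ω)),
        0 < phiDeriv p (s x) * cospOfSinp p (s x) ∧ |cos (ω * x)| < 1 := fun x hx => by
      have hxπ : ω * x < π := by
        have := hx.2.trans_le (min_le_right _ _)
        rwa [lt_div_iff₀ hω, mul_comm] at this
      exact ⟨phiDeriv_comp_mul_pos hp1 hp2 hs ⟨hx.1, hx.2.trans_le (min_le_left _ _)⟩,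
        abs_cos_lt_one ⟨mul_pos hω hx.1, hxπ⟩⟩
    have := abs_integral_deriv_mul_lt hc (min_le_left _ _)
      (hcont.mono (Icc_subset_Icc le_rfl hm.2.le))
      (fun x hx => hasDerivAt_phi_comp hp1 hs (Ioo_subset_Ioo_right hm.2.le hx))
      (fun x hx => (phiDeriv_comp_mul_pos hp1 hp2 hs hx).le) hcos.continuousOn
      (fun x _ => abs_cos_le_one _) hstrict
    rwa [hsm, phi_phiMaxPoint hp1, apply_zero_of_leftInvOn_Fp hs, phi_zero hp1, sub_zero] at this
  have hright :
      |∫ u in m..pip p / 2, phiDeriv p (s u) * cospOfSinp p (s u) * cos (ω * u)| ≤ cp p := by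
    have := abs_integral_deriv_mul_le hm.2.le (f := fun u => -phi p (s u))
      (hcont.neg.mono (Icc_subset_Icc hm.1.le le_rfl))
      (fun x hx => (hasDerivAt_phi_comp hp1 hs (Ioo_subset_Ioo_left hm.1.le hx)).fun_neg)
      (fun x hx => neg_nonneg.mpr (phiDeriv_comp_mul_nonpos hp1 hp2 hs hx))
      hcos.continuousOn (fun x _ => abs_cos_le_one _)
    simpa [hsm, phi_phiMaxPoint hp1, apply_half_pip_of_leftInvOn_Fp hs,
      phi_one hp1 hp2, intervalIntegral.integral_neg] using this
  rw [← intervalIntegral.integral_add_adjacent_intervals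
    (hint.mono_set (uIcc_subset_uIcc_left (mem_uIcc_of_le hm.1.le hm.2.le)))
    (hint.mono_set (uIcc_subset_uIcc_right (mem_uIcc_of_le hm.1.le hm.2.le)))]
  linarith [abs_add_le (∫ u in 0..m, phiDeriv p (s u) * cospOfSinp p (s u) * cos (ω * u))
    (∫ u in m..pip p / 2, phiDeriv p (s u) * cospOfSinp p (s u) * cos (ω * u))]

theorem intervalIntegrable_deriv_mul_cos (hp : 1 < p) (hs : LeftInvOn s (Fp p) (Icc 0 1))
    (ω : ℝ) :
    IntervalIntegrable (fun u => deriv s u * cos (ω * u)) volume 0 (pip p / 2) := by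
  have hP : 0 ≤ pip p / 2 := by linarith [pip_pos hp]
  refine ContinuousOn.intervalIntegrable (u := fun u => cospOfSinp p (s u) * cos (ω * u)) ?_
    |>.congr_uIoo fun u hu => ?_
  · rw [uIcc_of_le hP]
    exact (continuousOn_cospOfSinp_comp hp hs).mul (by fun_prop)
  · rw [uIoo_of_le hP] at hu
    rw [(hasDerivAt_of_leftInvOn_Fp hp hs hu).deriv]

theorem abs_integral_deriv_mul_cos_lt (hp1 : 1 < p) (hp2 : p < 2)
    (hs : LeftInvOn s (Fp p) (Icc 0 1)) {ω : ℝ} (hω : 0 < ω) :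
    |∫ u in 0..pip p / 2, deriv s u * cos (ω * u)| < 2 * cp p / ω ^ 2 := by
  have hP : 0 ≤ pip p / 2 := by linarith [pip_pos hp1]
  have hderiv : ∫ u in 0..pip p / 2, deriv s u * cos (ω * u) =
      ∫ u in 0..pip p / 2, cospOfSinp p (s u) * cos (ω * u) :=
    intervalIntegral.integral_congr_Ioo_of_le hP fun u hu => by
      rw [(hasDerivAt_of_leftInvOn_Fp hp1 hs hu).deriv]
  have hibp : ω ^ 2 * ∫ u in 0..pip p / 2, cospOfSinp p (s u) * cos (ω * u) =
      ∫ u in 0..pip p / 2, phiDeriv p (s u) * cospOfSinp p (s u) * cos (ω * u) := by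
    rw [integral_phiDeriv_comp_mul_cos hp1 hp2 hs,
      ← mul_integral_cospOfSinp_comp_mul_cos hp1 hp2 hs]
    ring
  rw [hderiv, lt_div_iff₀ (by positivity), ← abs_of_pos (by positivity : 0 < ω ^ 2), ← abs_mul,
    mul_comm, hibp]
  exact abs_integral_phiDeriv_comp_mul_cos_lt hp1 hp2 hs hω

end Coefficient

end SinP

open SinP in
theorem fourier_coeff_bound_p_lt_two_general (p : ℝ) (hp1 : 1 < p) (hp2 : p < 2) (s : ℝ → ℝ)
    (hinv₁ : ∀ y ∈ Icc (0:ℝ) 1, s (Fp p y) = y)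
    (hsym : ∀ x, s (pip p / 2 - x) = s (pip p / 2 + x))
    (j : ℕ) (hj : 1 ≤ j) :
    |2 * ∫ x in (0:ℝ)..1, deriv s (pip p * x) * Real.cos (j * π * x)| <
      8 * pip p / ((j : ℝ)^2 * π^2) * cp p := by
  have hP := pip_pos hp1
  set ω := j * π / pip p with hω_def
  have hω : 0 < ω := by
    have : (0 : ℝ) < j := by exact_mod_cast hj
    positivity
  rw [integral_deriv_comp_mul_mul_cos_of_symm hP.ne' (div_mul_cancel₀ _ hP.ne') hsym
    (intervalIntegrable_deriv_mul_cos hp1 hinv₁ ω)]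
  set A := ∫ u in 0..pip p / 2, deriv s u * cos (ω * u)
  have hA : |A| < 2 * cp p / ω ^ 2 := abs_integral_deriv_mul_cos_lt hp1 hp2 hinv₁ hω
  have hsign : |1 - (-1) ^ j| ≤ (2 : ℝ) :=
    (abs_sub _ _).trans (by simp [one_add_one_eq_two])
  calc |2 * ((pip p)⁻¹ * ((1 - (-1) ^ j) * A))|
      = 2 * (pip p)⁻¹ * |1 - (-1) ^ j| * |A| := by
        rw [abs_mul, abs_mul, abs_mul, abs_two, abs_inv, abs_of_pos hP, mul_assoc, mul_assoc]
    _ ≤ 2 * (pip p)⁻¹ * 2 * |A| := by gcongr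
    _ < 2 * (pip p)⁻¹ * 2 * (2 * cp p / ω ^ 2) := by gcongr
    _ = 8 * pip p / ((j : ℝ) ^ 2 * π ^ 2) * cp p := by
        rw [hω_def]
        field_simp
        ring

theorem fourier_coeff_bound_p_lt_two (p : ℝ) (hp1 : 1 < p) (hp2 : p < 2) (s : ℝ → ℝ)
    (hinv₁ : ∀ y ∈ Icc (0:ℝ) 1, s (Fp p y) = y)
    (hinv₂ : ∀ x ∈ Icc (0:ℝ) (pip p / 2), Fp p (s x) = x)
    (hodd : ∀ x, s (-x) = -s x)
    (hsym : ∀ x, s (pip p / 2 - x) = s (pip p / 2 + x))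
    (j : ℕ) (hj : 1 ≤ j) :
    |2 * ∫ x in (0:ℝ)..1, deriv s (pip p * x) * Real.cos (j * π * x)| <
      8 * pip p / ((j : ℝ)^2 * π^2) * cp p :=
  fourier_coeff_bound_p_lt_two_general p hp1 hp2 s hinv₁ hsym j hj
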